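/- arXiv:0912.0385 — 2 statements merged into one kernel-verified Lean document; each statement's English description precedes it below -/
import Mathlib

section
/- With λ an elementary character datum at α = α_{i,j} and L = ⟨X_β : β ∈ leg(α)⟩, the restriction of the induced character λ^U to L equals the regular character of L. -/
open Matrix CategoryTheory
open scoped Classical

/-- A matrix is upper unitriangular: ones on the diagonal, zeros below. -/
def IsUnitriangular {n : ℕ} {F : Type} [Field F] (M : Matrix (Fin n) (Fin n) F) : Prop :=
  (∀ i, M i i = 1) ∧ ∀ ⦃i j : Fin n⦄, j < i → M i j = 0

theorem IsUnitriangular.blockTriangular {n : ℕ} {F : Type} [Field F]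
    {M : Matrix (Fin n) (Fin n) F} (h : IsUnitriangular M) : M.BlockTriangular id :=
  fun _ _ hij => h.2 hij

theorem IsUnitriangular.mul {n : ℕ} {F : Type} [Field F]
    {A B : Matrix (Fin n) (Fin n) F} (hA : IsUnitriangular A) (hB : IsUnitriangular B) :
    IsUnitriangular (A * B) := by
  constructor
  · intro i
    rw [Matrix.mul_apply, Finset.sum_eq_single i]
    · rw [hA.1, hB.1, one_mul]
    · intro k _ hk
      rcases lt_or_gt_of_ne hk with h | h
      · rw [hA.2 h, zero_mul]
      · rw [hB.2 h, mul_zero]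
    · simp
  · intro i j hij
    rw [Matrix.mul_apply]
    apply Finset.sum_eq_zero
    intro k _
    rcases le_or_gt k j with h | h
    · rw [hA.2 (lt_of_le_of_lt h hij), zero_mul]
    · rw [hB.2 h, mul_zero]

theorem IsUnitriangular.diag_of_mul_eq_one {n : ℕ} {F : Type} [Field F]
    {A B : Matrix (Fin n) (Fin n) F} (hBlow : ∀ ⦃i j : Fin n⦄, j < i → B i j = 0)
    (hA : IsUnitriangular A) (h : B * A = 1) : ∀ i, B i i = 1 := by
  intro i
  have := congrArg (fun M => M i i) h
  simp only [Matrix.one_apply_eq] at this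
  rw [Matrix.mul_apply, Finset.sum_eq_single i] at this
  · rwa [hA.1, mul_one] at this
  · intro k _ hk
    rcases lt_or_gt_of_ne hk with h' | h'
    · rw [hBlow h', zero_mul]
    · rw [hA.2 h', mul_zero]
  · simp

/-- The group `U_n(q)` of upper unitriangular matrices, as a subgroup of `GL n F`. -/
def UT (n : ℕ) (F : Type) [Field F] : Subgroup (GL (Fin n) F) where
  carrier := {M | IsUnitriangular (M : Matrix (Fin n) (Fin n) F)}
  one_mem' := by
    constructor
    · intro i; simp
    · intro i j hij; exact Matrix.one_apply_ne (ne_of_gt hij)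
  mul_mem' := by
    intro A B hA hB
    exact hA.mul hB
  inv_mem' := by
    intro M hM
    have : Invertible (M : Matrix (Fin n) (Fin n) F) := M.invertible
    have hinv : ((M⁻¹ : GL (Fin n) F) : Matrix (Fin n) (Fin n) F)
        = (M : Matrix (Fin n) (Fin n) F)⁻¹ := Matrix.coe_units_inv M
    have hbt := Matrix.blockTriangular_inv_of_blockTriangular hM.blockTriangular
    have hlow : ∀ ⦃i j : Fin n⦄, j < i →
        ((M⁻¹ : GL (Fin n) F) : Matrix (Fin n) (Fin n) F) i j = 0 := by
      intro i j hij
      rw [hinv]; exact hbt hij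
    refine ⟨?_, hlow⟩
    intro i
    rw [hinv]
    refine IsUnitriangular.diag_of_mul_eq_one (fun i j hij => hbt hij) hM ?_ i
    exact Matrix.nonsing_inv_mul _ ((Matrix.isUnit_iff_isUnit_det _).mp M.isUnit)
/-- The root subgroup `X_{(a,b)}` (as a set of elements of `UT n F`): matrices
`1 + c · e_{a,b}`. In the paper's notation the root `α_{i,j}` corresponds to the
matrix position `(i, j+1)`. -/
def rootSet (n : ℕ) (F : Type) [Field F] (a b : Fin n) : Set (UT n F) :=
  {M | ∃ c : F, ((M : GL (Fin n) F) : Matrix (Fin n) (Fin n) F)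
    = 1 + Matrix.single a b c}

/-- The set of positive roots, as matrix positions `(a, b)` with `a < b`. -/
def posRoots (n : ℕ) : Set (Fin n × Fin n) := {p | p.1 < p.2}

/-- The arm of the root at position `(a,b)`: positions `(a, c)` with `a < c < b`. -/
def arm {n : ℕ} (a b : Fin n) : Set (Fin n × Fin n) := {p | p.1 = a ∧ a < p.2 ∧ p.2 < b}

/-- The leg of the root at position `(a,b)`: positions `(c, b)` with `a < c < b`. -/
def leg {n : ℕ} (a b : Fin n) : Set (Fin n × Fin n) := {p | p.2 = b ∧ a < p.1 ∧ p.1 < b}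

/-- The hook of the root at position `(a,b)`. -/
def hook {n : ℕ} (a b : Fin n) : Set (Fin n × Fin n) := {(a, b)} ∪ arm a b ∪ leg a b

/-- Subgroup of `UT n F` generated by the root subgroups at positions in `S`. -/
def groupOf (n : ℕ) (F : Type) [Field F] (S : Set (Fin n × Fin n)) : Subgroup (UT n F) :=
  Subgroup.closure (⋃ p ∈ S, rootSet n F p.1 p.2)

/-- The hook group `H(α)` at position `(a,b)`. -/
def hookGroup (n : ℕ) (F : Type) [Field F] (a b : Fin n) : Subgroup (UT n F) :=
  groupOf n F (hook a b)

/-- The base group `V_α = ⟨X_β : β ∈ Σ⁺ \ arm(α)⟩` at position `(a,b)`. -/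
def Vgroup (n : ℕ) (F : Type) [Field F] (a b : Fin n) : Subgroup (UT n F) :=
  groupOf n F (posRoots n \ arm a b)

/-- The induced character: characters of a subgroup `H ≤ G` are recorded as functions
`G → ℂ` (only the values on `H` matter). -/
noncomputable def ind {G : Type} [Group G] (H : Subgroup G) (f : G → ℂ) : G → ℂ :=
  fun g => (Nat.card H : ℂ)⁻¹ * ∑ᶠ x : G, if x⁻¹ * g * x ∈ H then f (x⁻¹ * g * x) else 0

/-- `χ : G → ℂ` is the character of some irreducible complex representation of `G`. -/
def IsIrrChar (G : Type) [Group G] (χ : G → ℂ) : Prop :=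
  ∃ V : FDRep ℂ G, Simple V ∧ V.character = χ

/-- The standard inner product of class functions; for characters `χ`, `ψ` with `ψ`
irreducible this is the multiplicity of `ψ` in `χ`. -/
noncomputable def innerChar {G : Type} [Group G] (χ ψ : G → ℂ) : ℂ :=
  (Nat.card G : ℂ)⁻¹ * ∑ᶠ g : G, χ g * (starRingEnd ℂ) (ψ g)

/-- A datum for an elementary character at the root position `(a,b)`: a function
`f : UT n F → ℂ` which is multiplicative on `V_α` (hence a linear character of `V_α`,
automatically trivial on `[V_α, V_α]`), trivial on every root subgroup `X_β ⊆ V_α`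
with `β ≠ α`, and nontrivial on `X_α`. -/
structure IsElemDatum (n : ℕ) (F : Type) [Field F] (a b : Fin n) (f : UT n F → ℂ) : Prop where
  mul_mem : ∀ x ∈ Vgroup n F a b, ∀ y ∈ Vgroup n F a b, f (x * y) = f x * f y
  map_one : f 1 = 1
  triv : ∀ p ∈ posRoots n \ arm a b, p ≠ (a, b) → ∀ x ∈ rootSet n F p.1 p.2, f x = 1
  nontriv : ∃ x ∈ rootSet n F a b, f x ≠ 1

/-- The elementary character `λ^U` at position `(a,b)` attached to the datum `f`. -/
noncomputable def elemChar (n : ℕ) (F : Type) [Field F] (a b : Fin n) (f : UT n F → ℂ) :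
    UT n F → ℂ :=
  ind (Vgroup n F a b) f

/-- Two root positions are separate if they share no row and no column. -/
def Separate {n : ℕ} (p p' : Fin n × Fin n) : Prop := p.1 ≠ p'.1 ∧ p.2 ≠ p'.2

/-- A basic set: a nonempty set of pairwise separate positive root positions. -/
def IsBasicSet {n : ℕ} (D : Finset (Fin n × Fin n)) : Prop :=
  D.Nonempty ∧ (∀ p ∈ D, p.1 < p.2) ∧ ∀ p ∈ D, ∀ p' ∈ D, p ≠ p' → Separate p p'

/-- `ψ` is a basic character: a tensor (pointwise) product of elementary characters
over a basic set. -/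
def IsBasicChar (n : ℕ) (F : Type) [Field F] (ψ : UT n F → ℂ) : Prop :=
  ∃ (D : Finset (Fin n × Fin n)) (φ : Fin n × Fin n → (UT n F → ℂ)),
    IsBasicSet D ∧ (∀ p ∈ D, IsElemDatum n F p.1 p.2 (φ p)) ∧
      ψ = ∏ p ∈ D, elemChar n F p.1 p.2 (φ p)

/-- Maximal exponent `μ(n)`: `μ(2m) = m(m-1)`, `μ(2m+1) = m²`. -/
def muExp (n : ℕ) : ℕ := (n / 2) * ((n - 1) / 2)

/-!
Write `α = (a, b)` for the matrix position of the root. The position sets `leg α` and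
`Σ⁺ \ arm α` are transitive relations on `Fin n`, so the groups they generate are pattern groups:
an element lies in them iff its off-diagonal support does. Hence `L ≃ F^{leg α}`, and
`U = V_α · A` where `A ≃ F^{arm α}` consists of the arm matrices in row `a`; so
`λ^U(1) = [U : V_α] = q^{|arm α|} = q^{|leg α|} = |L|`.

For `1 ≠ x ∈ L`, `x - 1` is supported in column `b`. Hence every conjugate `y⁻¹ x y` lies in
`V_α`, on which `λ = θ ∘ (entry (a, b))` for the nontrivial additive character `θ = λ ∘ x_α`, and
`λ(y⁻¹ x y) = θ((y⁻¹ (x - 1)) a b)`. Right translation of `y⁻¹` by `x_{a,k}(c)` with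
`(x - 1) k b ≠ 0` shifts this argument by the arbitrary constant `c (x - 1) k b`, so the
character sum defining `λ^U(x)` vanishes.
-/

theorem Subgroup.closure_induction_of_finite {G : Type*} [Group G] [Finite G] {s : Set G}
    {p : G → Prop} (mem : ∀ x ∈ s, p x) (one : p 1) (mul : ∀ x y, p x → p y → p (x * y))
    {x : G} (hx : x ∈ Subgroup.closure s) : p x := by
  rw [← Subgroup.mem_toSubmonoid, Subgroup.closure_toSubmonoid_of_finite] at hx
  exact Submonoid.closure_induction mem one (fun x y _ _ => mul x y) hx

theorem finsum_eq_zero_of_mul_right {G R : Type*} [Group G] [Finite G] [CommRing R]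
    [NoZeroDivisors R] (g : G → R) (m : G) {z : R} (hz : z ≠ 1)
    (hg : ∀ y, g (y * m) = z * g y) : ∑ᶠ y, g y = 0 := by
  have hsum : ∑ᶠ y, g y = z * ∑ᶠ y, g y := by
    rw [mul_finsum, ← finsum_comp_equiv (Equiv.mulRight m)]
    exact finsum_congr fun y => hg y
  have : (z - 1) * ∑ᶠ y, g y = 0 := by rw [sub_mul, one_mul, ← hsum, sub_self]
  exact (mul_eq_zero.1 this).resolve_left (sub_ne_zero.2 hz)

theorem Matrix.mul_mul_apply_of_col_eq_zero {m R : Type*} [Fintype m] [DecidableEq m]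
    [NonUnitalNonAssocSemiring R] {N : Matrix m m R} {b : m} (hN : ∀ i j, j ≠ b → N i j = 0)
    (A B : Matrix m m R) (i j : m) : (A * N * B) i j = (A * N) i b * B b j := by
  rw [mul_apply, Finset.sum_eq_single b]
  · intro k _ hk
    rw [mul_apply, Finset.sum_eq_zero fun l _ => by rw [hN l k hk, mul_zero], zero_mul]
  · simp

lemma ind_apply_one {G : Type} [Group G] [Finite G] (H : Subgroup G) {f : G → ℂ}
    (hf : f 1 = 1) : ind H f 1 = H.index := by
  have : Fintype G := Fintype.ofFinite G
  have hH : (Nat.card H : ℂ) ≠ 0 := Nat.cast_ne_zero.2 Nat.card_pos.ne'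
  simp only [ind, mul_one, inv_mul_cancel, H.one_mem, if_true, hf, finsum_eq_sum_of_fintype,
    Finset.sum_const, Finset.card_univ, nsmul_eq_mul, ← Nat.card_eq_fintype_card,
    ← H.card_mul_index, Nat.cast_mul]
  field_simp

namespace UT

variable {n : ℕ} {F : Type} [Field F]

instance [Finite F] : Finite (UT n F) := Subtype.finite

def mat (M : UT n F) : Matrix (Fin n) (Fin n) F :=
  ((M : GL (Fin n) F) : Matrix (Fin n) (Fin n) F)

@[simp] lemma mat_one : mat (1 : UT n F) = 1 := rfl

@[simp] lemma mat_mul (M N : UT n F) : mat (M * N) = mat M * mat N := rfl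

lemma mat_inv_mul (M : UT n F) : mat M⁻¹ * mat M = 1 := by
  rw [← mat_mul, inv_mul_cancel, mat_one]

lemma mat_injective : Function.Injective (mat : UT n F → Matrix (Fin n) (Fin n) F) :=
  fun _ _ h => Subtype.ext (Units.ext h)

lemma mat_apply_self (M : UT n F) (i : Fin n) : mat M i i = 1 := M.2.1 i

lemma mat_apply_of_lt (M : UT n F) {i j : Fin n} (h : j < i) : mat M i j = 0 := M.2.2 h

def ofMatrix (M : Matrix (Fin n) (Fin n) F) (hM : IsUnitriangular M) : UT n F :=
  ⟨GeneralLinearGroup.mkOfDetNeZero M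
    (by simp [det_of_isUpperTriangular hM.blockTriangular, hM.1]), hM⟩

@[simp] lemma mat_ofMatrix (M : Matrix (Fin n) (Fin n) F) (hM : IsUnitriangular M) :
    mat (ofMatrix M hM) = M := rfl

lemma isUnitriangular_one_add_single {p q : Fin n} (h : p < q) (c : F) :
    IsUnitriangular (1 + single p q c) := by
  refine ⟨fun i => ?_, fun i j hij => ?_⟩
  · rw [Matrix.add_apply, one_apply_eq, single_apply, if_neg, add_zero]
    rintro ⟨rfl, rfl⟩
    exact lt_irrefl _ h
  · rw [Matrix.add_apply, one_apply_ne hij.ne', single_apply, if_neg, add_zero]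
    rintro ⟨rfl, rfl⟩
    exact not_lt.2 hij.le h

def rootElt (p q : Fin n) (h : p < q) (c : F) : UT n F :=
  ofMatrix _ (isUnitriangular_one_add_single h c)

lemma rootElt_mem_rootSet {p q : Fin n} (h : p < q) (c : F) :
    rootElt p q h c ∈ rootSet n F p q := ⟨c, rfl⟩

lemma eq_rootElt_of_mem_rootSet {p q : Fin n} (h : p < q) {M : UT n F}
    (hM : M ∈ rootSet n F p q) : ∃ c, M = rootElt p q h c :=
  let ⟨c, hc⟩ := hM; ⟨c, mat_injective hc⟩

lemma rootElt_mul {p q : Fin n} (h : p < q) (c d : F) :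
    rootElt p q h c * rootElt p q h d = rootElt p q h (c + d) := by
  apply mat_injective
  have hsq : single p q c * single p q d = 0 := single_mul_single_of_ne c p q p h.ne' d
  simp only [mat_mul, rootElt, mat_ofMatrix, add_mul, mul_add, one_mul, mul_one, hsq, single_add]
  abel

lemma rootElt_zero {p q : Fin n} (h : p < q) : rootElt p q h (0 : F) = 1 :=
  mat_injective (by simp [rootElt])

noncomputable def supp (M : UT n F) : Finset (Fin n × Fin n) :=
  Finset.univ.filter fun p => p.1 < p.2 ∧ mat M p.1 p.2 ≠ 0

lemma mem_supp {M : UT n F} {p : Fin n × Fin n} :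
    p ∈ supp M ↔ p.1 < p.2 ∧ mat M p.1 p.2 ≠ 0 := by
  simp [supp]

lemma mat_apply_of_notMem_supp {M : UT n F} {i j : Fin n} (h : (i, j) ∉ supp M) :
    mat M i j = (1 : Matrix (Fin n) (Fin n) F) i j := by
  rcases lt_trichotomy i j with hij | rfl | hij
  · rw [one_apply_ne hij.ne]
    by_contra h0
    exact h (mem_supp.2 ⟨hij, h0⟩)
  · rw [mat_apply_self, one_apply_eq]
  · rw [mat_apply_of_lt _ hij, one_apply_ne hij.ne']

lemma eq_one_of_supp_eq_empty {M : UT n F} (h : supp M = ∅) : M = 1 :=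
  mat_injective <| Matrix.ext fun i j => by
    rw [mat_apply_of_notMem_supp (by simp [h]), mat_one]

/-- Take `p` in the leftmost nonzero column; column `p.1` lies further left, so it is an identity
column. -/
lemma exists_mem_supp_col_eq_one {M : UT n F} (hM : (supp M).Nonempty) :
    ∃ p ∈ supp M, ∀ i, mat M i p.1 = (1 : Matrix (Fin n) (Fin n) F) i p.1 := by
  obtain ⟨p, hp, hmin⟩ := (supp M).exists_min_image Prod.snd hM
  refine ⟨p, hp, fun i => mat_apply_of_notMem_supp fun hi => ?_⟩
  exact (hmin _ hi).not_gt (mem_supp.1 hp).1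

lemma mat_mul_rootElt_of_col_eq_one {M : UT n F} {p q : Fin n} (h : p < q) (c : F)
    (hM : ∀ i, mat M i p = (1 : Matrix (Fin n) (Fin n) F) i p) :
    mat (M * rootElt p q h c) = mat M + single p q c := by
  rw [mat_mul, rootElt, mat_ofMatrix, mul_add, mul_one]
  congr 1
  ext i j
  by_cases hj : j = q
  · subst hj
    rw [mul_single_apply_same, hM, single_apply]
    by_cases hi : i = p
    · subst hi
      simp
    · simp [one_apply_ne hi, Ne.symm hi]
  · rw [mul_single_apply_of_ne (hbj := hj), single_apply, if_neg fun h => hj h.2.symm]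

theorem mem_groupOf_of_supp_subset {S : Set (Fin n × Fin n)} (M : UT n F)
    (hM : ↑(supp M) ⊆ S) : M ∈ groupOf n F S := by
  obtain ⟨s, hs⟩ : ∃ s, supp M = s := ⟨_, rfl⟩
  induction s using Finset.strongInduction generalizing M with
  | H s ih =>
  rcases s.eq_empty_or_nonempty with rfl | hne
  · rw [eq_one_of_supp_eq_empty hs]
    exact one_mem _
  obtain ⟨⟨p, q⟩, hpq, hcol⟩ := exists_mem_supp_col_eq_one (hs ▸ hne)
  obtain ⟨hlt, hc⟩ := mem_supp.1 hpq
  set c := mat M p q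
  have hM' : mat (M * rootElt p q hlt (-c)) = mat M + single p q (-c) :=
    mat_mul_rootElt_of_col_eq_one hlt (-c) hcol
  have hsupp : supp (M * rootElt p q hlt (-c)) = s.erase (p, q) := by
    ext ⟨i, j⟩
    rw [← hs, Finset.mem_erase, mem_supp, mem_supp, hM', Matrix.add_apply, single_apply]
    by_cases h : p = i ∧ q = j
    · obtain ⟨rfl, rfl⟩ := h
      simp [c]
    · have hne : (i, j) ≠ (p, q) := by
        rintro ⟨⟩
        exact h ⟨rfl, rfl⟩
      simp [h, hne]
  have hfactor : M = M * rootElt p q hlt (-c) * rootElt p q hlt c := by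
    rw [mul_assoc, rootElt_mul, neg_add_cancel, rootElt_zero, mul_one]
  rw [hfactor]
  refine mul_mem (ih _ (Finset.erase_ssubset (hs ▸ hpq)) _ ?_ hsupp) ?_
  · rw [hsupp, ← hs]
    exact subset_trans (Finset.coe_subset.2 (Finset.erase_subset _ _)) hM
  · exact Subgroup.subset_closure
      (Set.mem_iUnion₂.2 ⟨(p, q), hM hpq, rootElt_mem_rootSet hlt c⟩)

@[simp] lemma supp_one : supp (1 : UT n F) = ∅ := by
  ext ⟨i, j⟩
  simp only [mem_supp, mat_one, Finset.notMem_empty, iff_false, not_and, not_not]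
  exact fun h => one_apply_ne h.ne

lemma supp_mul_subset {S : Set (Fin n × Fin n)} (hS : IsTrans (Fin n) fun i j => (i, j) ∈ S)
    {M N : UT n F} (hM : ↑(supp M) ⊆ S) (hN : ↑(supp N) ⊆ S) : ↑(supp (M * N)) ⊆ S := by
  rintro ⟨i, j⟩ hij
  obtain ⟨hlt, hne⟩ := mem_supp.1 hij
  rw [mat_mul, mul_apply] at hne
  obtain ⟨k, -, hk⟩ := Finset.exists_ne_zero_of_sum_ne_zero hne
  have hMk := left_ne_zero_of_mul hk
  have hNk := right_ne_zero_of_mul hk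
  rcases lt_trichotomy i k with hik | rfl | hki
  · rcases lt_trichotomy k j with hkj | rfl | hjk
    · exact hS.trans _ _ _ (hM (mem_supp.2 ⟨hik, hMk⟩)) (hN (mem_supp.2 ⟨hkj, hNk⟩))
    · exact hM (mem_supp.2 ⟨hik, hMk⟩)
    · exact absurd (mat_apply_of_lt N hjk) hNk
  · exact hN (mem_supp.2 ⟨hlt, hNk⟩)
  · exact absurd (mat_apply_of_lt M hki) hMk

lemma supp_subset_of_mem_rootSet {p q : Fin n} {M : UT n F} (hM : M ∈ rootSet n F p q) :
    ↑(supp M) ⊆ ({(p, q)} : Set (Fin n × Fin n)) := by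
  obtain ⟨c, hc⟩ := hM
  rintro ⟨i, j⟩ hij
  obtain ⟨hlt, hne⟩ := mem_supp.1 hij
  change mat M i j ≠ 0 at hne
  rw [mat, hc, Matrix.add_apply, one_apply_ne hlt.ne, zero_add, single_apply] at hne
  obtain ⟨rfl, rfl⟩ := (ite_ne_right_iff.1 hne).1
  rfl

theorem mem_groupOf_iff [Finite F] {S : Set (Fin n × Fin n)}
    (hS : IsTrans (Fin n) fun i j => (i, j) ∈ S) {M : UT n F} :
    M ∈ groupOf n F S ↔ ↑(supp M) ⊆ S := by
  refine ⟨fun hM => ?_, mem_groupOf_of_supp_subset M⟩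
  refine Subgroup.closure_induction_of_finite (p := fun M => ↑(supp M) ⊆ S) ?_ ?_
    (fun _ _ => supp_mul_subset hS) hM
  · intro M hM
    obtain ⟨p, hp, hMp⟩ := Set.mem_iUnion₂.1 hM
    exact (supp_subset_of_mem_rootSet hMp).trans (Set.singleton_subset_iff.2 hp)
  · simp [supp_one]

section Pattern

variable {S : Set (Fin n × Fin n)}

noncomputable def patternMatrix (S : Set (Fin n × Fin n)) (t : S → F) :
    Matrix (Fin n) (Fin n) F :=
  1 + Matrix.of fun i j => if h : (i, j) ∈ S then t ⟨(i, j), h⟩ else 0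

lemma isUnitriangular_patternMatrix (hS : ∀ p ∈ S, p.1 < p.2) (t : S → F) :
    IsUnitriangular (patternMatrix S t) := by
  refine ⟨fun i => ?_, fun i j hij => ?_⟩
  · simp only [patternMatrix, Matrix.add_apply, one_apply_eq, of_apply]
    rw [dif_neg fun h => lt_irrefl i (hS _ h), add_zero]
  · simp only [patternMatrix, Matrix.add_apply, one_apply_ne hij.ne', of_apply]
    rw [dif_neg fun h => lt_asymm hij (hS _ h), add_zero]

noncomputable def patternElt (hS : ∀ p ∈ S, p.1 < p.2) (t : S → F) : UT n F :=
  ofMatrix _ (isUnitriangular_patternMatrix hS t)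

def entriesOn (S : Set (Fin n × Fin n)) (M : UT n F) : S → F := fun p => mat M p.1.1 p.1.2

lemma entriesOn_patternElt (hS : ∀ p ∈ S, p.1 < p.2) (t : S → F) :
    entriesOn S (patternElt hS t) = t := by
  funext ⟨⟨i, j⟩, h⟩
  simp [entriesOn, patternElt, patternMatrix, one_apply_ne (hS _ h).ne, h]

lemma supp_patternElt_subset (hS : ∀ p ∈ S, p.1 < p.2) (t : S → F) :
    ↑(supp (patternElt hS t)) ⊆ S := by
  rintro ⟨i, j⟩ hij
  obtain ⟨hlt, hne⟩ := mem_supp.1 hij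
  by_contra h
  simp [patternElt, patternMatrix, one_apply_ne hlt.ne, h] at hne

lemma patternElt_entriesOn (hS : ∀ p ∈ S, p.1 < p.2) {M : UT n F} (hM : ↑(supp M) ⊆ S) :
    patternElt hS (entriesOn S M) = M := by
  refine mat_injective (Matrix.ext fun i j => ?_)
  by_cases h : (i, j) ∈ S
  · simp [patternElt, patternMatrix, entriesOn, h, one_apply_ne (hS _ h).ne]
  · rw [mat_apply_of_notMem_supp fun h' => h (hM h')]
    simp [patternElt, patternMatrix, h]

noncomputable def groupOfEquiv [Finite F] (hS : ∀ p ∈ S, p.1 < p.2)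
    (hT : IsTrans (Fin n) fun i j => (i, j) ∈ S) : groupOf n F S ≃ (S → F) where
  toFun M := entriesOn S M
  invFun t := ⟨patternElt hS t, mem_groupOf_of_supp_subset _ (supp_patternElt_subset hS t)⟩
  left_inv M := Subtype.ext (patternElt_entriesOn hS ((mem_groupOf_iff hT).1 M.2))
  right_inv := entriesOn_patternElt hS

end Pattern

section Hook

variable {a b : Fin n}

lemma fst_lt_snd_of_mem_arm : ∀ p ∈ arm a b, p.1 < p.2 := fun _ hp => hp.1 ▸ hp.2.1

lemma fst_lt_snd_of_mem_leg : ∀ p ∈ leg a b, p.1 < p.2 := fun _ hp => hp.1 ▸ hp.2.2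

lemma isTrans_leg : IsTrans (Fin n) fun i j => (i, j) ∈ leg a b :=
  ⟨fun _ _ _ hik hkj => by
    obtain ⟨rfl, -⟩ := hik
    exact (lt_irrefl _ hkj.2.2).elim⟩

lemma isTrans_posRoots_diff_arm : IsTrans (Fin n) fun i j => (i, j) ∈ posRoots n \ arm a b :=
  ⟨fun _ _ _ ⟨hik, hik'⟩ ⟨hkj, _⟩ =>
    ⟨lt_trans (α := Fin n) hik hkj,
      fun ⟨hia, _, hjb⟩ => hik' ⟨hia, hia ▸ hik, hkj.trans hjb⟩⟩⟩

lemma mem_Vgroup_iff [Finite F] {M : UT n F} :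
    M ∈ Vgroup n F a b ↔ entriesOn (arm a b) M = 0 := by
  rw [Vgroup, mem_groupOf_iff isTrans_posRoots_diff_arm]
  constructor
  · intro h
    funext ⟨p, hp⟩
    by_contra hne
    exact (h (mem_supp.2 ⟨fst_lt_snd_of_mem_arm p hp, hne⟩)).2 hp
  · intro h p hp
    obtain ⟨hlt, hne⟩ := mem_supp.1 hp
    exact ⟨hlt, fun harm => hne (congrFun h ⟨p, harm⟩)⟩

noncomputable def armElt (s : arm a b → F) : UT n F := patternElt fst_lt_snd_of_mem_arm s

lemma entriesOn_arm_mul_armElt (M : UT n F) (s : arm a b → F) :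
    entriesOn (arm a b) (M * armElt s) = entriesOn (arm a b) M + s := by
  funext ⟨⟨i, j⟩, hp⟩
  obtain ⟨rfl, hij, hjb⟩ := hp
  rw [Pi.add_apply, entriesOn, entriesOn, mat_mul, armElt, patternElt, mat_ofMatrix, patternMatrix,
    mul_add, mul_one, Matrix.add_apply, mul_apply, Finset.sum_eq_single i]
  · simp [mat_apply_self, show (i, j) ∈ arm i b from ⟨rfl, hij, hjb⟩]
  · intro k _ hk
    simp [arm, hk]
  · simp

lemma mul_inv_armElt_entriesOn_mem_Vgroup [Finite F] (M : UT n F) :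
    M * (armElt (entriesOn (arm a b) M))⁻¹ ∈ Vgroup n F a b := by
  rw [mem_Vgroup_iff]
  have h := entriesOn_arm_mul_armElt (M * (armElt (entriesOn (arm a b) M))⁻¹)
    (entriesOn (arm a b) M)
  rwa [inv_mul_cancel_right, right_eq_add] at h

noncomputable def vgroupProdEquiv [Finite F] : Vgroup n F a b × (arm a b → F) ≃ UT n F where
  toFun vs := vs.1 * armElt vs.2
  invFun M := (⟨_, mul_inv_armElt_entriesOn_mem_Vgroup M⟩, entriesOn (arm a b) M)
  left_inv := by
    rintro ⟨⟨v, hv⟩, s⟩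
    have hs : entriesOn (arm a b) (v * armElt s) = s := by
      rw [entriesOn_arm_mul_armElt, mem_Vgroup_iff.1 hv, zero_add]
    ext : 1
    · simp [hs]
    · exact hs
  right_inv M := inv_mul_cancel_right M _

def armEquivLeg : arm a b ≃ leg a b where
  toFun p := ⟨(p.1.2, b), rfl, p.2.2⟩
  invFun p := ⟨(a, p.1.1), rfl, p.2.2⟩
  left_inv := by
    rintro ⟨⟨i, j⟩, rfl, -⟩
    rfl
  right_inv := by
    rintro ⟨⟨i, j⟩, rfl, -⟩
    rfl

lemma index_Vgroup [Finite F] : (Vgroup n F a b).index = Nat.card (groupOf n F (leg a b)) := by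
  have h := (Vgroup n F a b).card_mul_index
  rw [← Nat.card_congr vgroupProdEquiv, Nat.card_prod] at h
  rw [Nat.card_congr (groupOfEquiv fst_lt_snd_of_mem_leg isTrans_leg),
    ← Nat.card_congr (armEquivLeg.arrowCongr (Equiv.refl F))]
  exact Nat.eq_of_mul_eq_mul_left Nat.card_pos h

end Hook

lemma mat_conj (x y : UT n F) : mat (y⁻¹ * x * y) = 1 + mat y⁻¹ * (mat x - 1) * mat y := by
  rw [mat_mul, mat_mul, mul_sub, sub_mul, mul_one, mat_inv_mul, add_sub_cancel]

lemma mul_rootElt_mul_apply {a b k : Fin n} (hak : a < k) (c : F) (y : UT n F)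
    (N : Matrix (Fin n) (Fin n) F) :
    (mat (y * rootElt a k hak c) * N) a b = (mat y * N) a b + c * N k b := by
  rw [mat_mul, rootElt, mat_ofMatrix, mul_add, mul_one, add_mul, Matrix.add_apply, mul_assoc]
  congr 1
  rw [mul_apply, Finset.sum_eq_single a, single_mul_apply_same, mat_apply_self, one_mul]
  · intro l _ hl
    rw [single_mul_apply_of_ne (h := hl), mul_zero]
  · simp

variable {a b : Fin n}

lemma mat_mul_apply_of_entriesOn_arm_eq_zero (hab : a ≠ b) {x : UT n F}
    (hx : entriesOn (arm a b) x = 0) (y : UT n F) : mat (x * y) a b = mat x a b + mat y a b := by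
  rw [mat_mul, mul_apply, Finset.sum_eq_add b a hab.symm _ (by simp) (by simp),
    mat_apply_self, mat_apply_self, mul_one, one_mul]
  rintro k - ⟨hkb, hka⟩
  rcases lt_or_gt_of_ne hka with hk | hk
  · rw [mat_apply_of_lt x hk, zero_mul]
  rcases lt_or_gt_of_ne hkb with hk' | hk'
  · rw [show mat x a k = 0 from congrFun hx ⟨(a, k), rfl, hk, hk'⟩, zero_mul]
  · rw [mat_apply_of_lt y hk', mul_zero]

lemma sub_one_apply_of_mem_leg [Finite F] {x : UT n F} (hx : x ∈ groupOf n F (leg a b))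
    (i : Fin n) {j : Fin n} (hj : j ≠ b) : (mat x - 1) i j = 0 := by
  rw [Matrix.sub_apply, sub_eq_zero]
  exact mat_apply_of_notMem_supp fun h => hj ((mem_groupOf_iff isTrans_leg).1 hx h).1

noncomputable def rootChar (hab : a < b) (f : UT n F → ℂ) (c : F) : ℂ := f (rootElt a b hab c)

lemma rootElt_mem_Vgroup (hab : a < b) (c : F) : rootElt a b hab c ∈ Vgroup n F a b :=
  Subgroup.subset_closure <| Set.mem_iUnion₂.2
    ⟨(a, b), ⟨hab, fun h => lt_irrefl b h.2.2⟩, rootElt_mem_rootSet hab c⟩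

end UT

namespace IsElemDatum

open UT

variable {n : ℕ} {F : Type} [Field F] {a b : Fin n} {f : UT n F → ℂ}

lemma rootChar_add (hab : a < b) (hf : IsElemDatum n F a b f) (c d : F) :
    rootChar hab f (c + d) = rootChar hab f c * rootChar hab f d := by
  rw [rootChar, ← rootElt_mul,
    hf.mul_mem _ (rootElt_mem_Vgroup hab c) _ (rootElt_mem_Vgroup hab d)]
  rfl

lemma rootChar_zero (hab : a < b) (hf : IsElemDatum n F a b f) : rootChar hab f 0 = 1 := by
  rw [rootChar, rootElt_zero, hf.map_one]

lemma apply_eq_rootChar [Finite F] (hab : a < b) (hf : IsElemDatum n F a b f) {M : UT n F}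
    (hM : M ∈ Vgroup n F a b) : f M = rootChar hab f (mat M a b) := by
  refine (Subgroup.closure_induction_of_finite
    (p := fun M => M ∈ Vgroup n F a b ∧ f M = rootChar hab f (mat M a b)) ?_ ?_ ?_ hM).2
  · intro M hM
    obtain ⟨p, hp, hMp⟩ := Set.mem_iUnion₂.1 hM
    refine ⟨Subgroup.subset_closure hM, ?_⟩
    by_cases hpab : p = (a, b)
    · subst hpab
      obtain ⟨c, rfl⟩ := eq_rootElt_of_mem_rootSet hab hMp
      simp [rootChar, rootElt, one_apply_ne hab.ne]
    · have hab_supp : (a, b) ∉ supp M := fun h => hpab (supp_subset_of_mem_rootSet hMp h).symm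
      rw [hf.triv p hp hpab M hMp, mat_apply_of_notMem_supp hab_supp, one_apply_ne hab.ne,
        hf.rootChar_zero hab]
  · exact ⟨one_mem _, by rw [hf.map_one, mat_one, one_apply_ne hab.ne, hf.rootChar_zero hab]⟩
  · rintro x y ⟨hx, hfx⟩ ⟨hy, hfy⟩
    refine ⟨(Vgroup n F a b).mul_mem hx hy, ?_⟩
    rw [hf.mul_mem x hx y hy, hfx, hfy, ← hf.rootChar_add hab,
      mat_mul_apply_of_entriesOn_arm_eq_zero hab.ne (mem_Vgroup_iff.1 hx)]

lemma apply_conj_of_mem_leg [Finite F] (hab : a < b) (hf : IsElemDatum n F a b f) {x : UT n F}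
    (hx : x ∈ groupOf n F (leg a b)) (y : UT n F) :
    y⁻¹ * x * y ∈ Vgroup n F a b ∧
      f (y⁻¹ * x * y) = rootChar hab f ((mat y⁻¹ * (mat x - 1)) a b) := by
  have hconj : ∀ j, mat (y⁻¹ * x * y) a j
      = (1 : Matrix (Fin n) (Fin n) F) a j + (mat y⁻¹ * (mat x - 1)) a b * mat y b j := by
    intro j
    rw [mat_conj, Matrix.add_apply,
      mul_mul_apply_of_col_eq_zero (sub_one_apply_of_mem_leg hx)]
  have hV : y⁻¹ * x * y ∈ Vgroup n F a b := by
    refine mem_Vgroup_iff.2 (funext fun ⟨⟨i, j⟩, hp⟩ => ?_)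
    obtain ⟨rfl, haj, hjb⟩ := hp
    rw [entriesOn, Pi.zero_apply, hconj, one_apply_ne haj.ne, mat_apply_of_lt y hjb, mul_zero,
      add_zero]
  refine ⟨hV, ?_⟩
  rw [hf.apply_eq_rootChar hab hV, hconj, one_apply_ne hab.ne, mat_apply_self, mul_one, zero_add]

theorem elemChar_eq_zero_of_mem_leg [Finite F] (hab : a < b) (hf : IsElemDatum n F a b f)
    {x : UT n F} (hx : x ∈ groupOf n F (leg a b)) (hx1 : x ≠ 1) : elemChar n F a b f x = 0 := by
  obtain ⟨⟨k, j⟩, hkj⟩ := Finset.nonempty_iff_ne_empty.2 (mt eq_one_of_supp_eq_empty hx1)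
  obtain ⟨hjb, hak, hkb⟩ := (mem_groupOf_iff isTrans_leg).1 hx hkj
  have hN : (mat x - 1) k b ≠ 0 := by
    rw [Matrix.sub_apply, one_apply_ne hkb.ne, sub_zero, ← hjb]
    exact (mem_supp.1 hkj).2
  obtain ⟨c, hc⟩ : ∃ c, rootChar hab f c ≠ 1 := by
    obtain ⟨x₀, hx₀, hne⟩ := hf.nontriv
    obtain ⟨c, rfl⟩ := eq_rootElt_of_mem_rootSet hab hx₀
    exact ⟨c, hne⟩
  set g : UT n F → ℂ := fun y => rootChar hab f ((mat y * (mat x - 1)) a b)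
  have hshift : ∀ y, g (y * rootElt a k hak (c / (mat x - 1) k b)) = rootChar hab f c * g y := by
    intro y
    simp only [g]
    rw [mul_rootElt_mul_apply, div_mul_cancel₀ _ hN, hf.rootChar_add hab, mul_comm]
  have hterm : ∀ y : UT n F,
      (if y⁻¹ * x * y ∈ Vgroup n F a b then f (y⁻¹ * x * y) else 0) = g y⁻¹ := by
    intro y
    rw [if_pos (hf.apply_conj_of_mem_leg hab hx y).1, (hf.apply_conj_of_mem_leg hab hx y).2]
  have hinv : ∑ᶠ y, g y⁻¹ = ∑ᶠ y, g y := finsum_comp_equiv (Equiv.inv (UT n F))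
  rw [elemChar, ind, finsum_congr hterm, hinv, finsum_eq_zero_of_mul_right g _ hc hshift, mul_zero]

end IsElemDatum

/-- The restriction of the elementary character `λ^U` at `α` to the leg group
`L = ⟨X_β : β ∈ leg(α)⟩` is the regular character of `L`. -/
theorem elemChar_restrict_leg (n : ℕ) (F : Type) [Field F] [Fintype F] (a b : Fin n)
    (hab : a < b) (f : UT n F → ℂ) (hf : IsElemDatum n F a b f) :
    ∀ x : UT n F, x ∈ groupOf n F (leg a b) →
      elemChar n F a b f x =
        if x = 1 then (Nat.card (groupOf n F (leg a b)) : ℂ) else 0 := by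
  intro x hx
  split_ifs with hx1
  · rw [hx1, elemChar, ind_apply_one _ hf.map_one, UT.index_Vgroup]
  · exact hf.elemChar_eq_zero_of_mem_leg hab hx hx1
end

section
/- For any 1 ≤ k < n-1, let T_k = Σ⁺ \ ({α_{1,k}, α_{k+1,n-1}} ∪ leg(α_{1,k}) ∪ arm(α_{k+1,n-1})). Then T_k is closed under root addition and the subgroup ⟨X_α : α ∈ T_k⟩ of U_n(q) is isomorphic to U_{n-1}(q). -/
open Matrix CategoryTheory
open scoped Classical

/-! In matrix positions, `T_k` is the set of positive roots `(a, b)` with `a ≠ k ≠ b`, that is,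
the image of the positive roots of `U_{n-1}` under `Fin.succAbove k`; such a set is visibly closed.
Inserting an identity row and column at `k` embeds `U_{n-1}(q)` into `U_n(q)` and carries the root
subgroup at `(a, b)` onto the one at `(succAbove k a, succAbove k b)`. Since `U_{n-1}(q)` is generated
by its root subgroups, the image of the embedding is exactly `⟨X_α : α ∈ T_k⟩`. Generation holds by
induction on the number of nonzero off-diagonal entries: if `(a, b)` is such an entry in the lowest
possible row, then row `b` is an identity row, so left multiplication by the transvection
`1 - M_{ab} e_{ab}` clears the entry `(a, b)` and changes nothing else. -/

namespace Matrix

section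

variable {R : Type*} [Semiring R] {m : ℕ}

def insertIdAt (k : Fin (m + 1)) (M : Matrix (Fin m) (Fin m) R) :
    Matrix (Fin (m + 1)) (Fin (m + 1)) R :=
  of (Fin.insertNth k (Pi.single k 1) fun i => Fin.insertNth k 0 (M i))

variable (k : Fin (m + 1)) (M : Matrix (Fin m) (Fin m) R)

@[simp] lemma insertIdAt_self_self : insertIdAt k M k k = 1 := by simp [insertIdAt]

@[simp] lemma insertIdAt_self_succAbove (j : Fin m) : insertIdAt k M k (k.succAbove j) = 0 := by
  simp [insertIdAt, Fin.succAbove_ne]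

@[simp] lemma insertIdAt_succAbove_self (i : Fin m) : insertIdAt k M (k.succAbove i) k = 0 := by
  simp [insertIdAt]

@[simp] lemma insertIdAt_succAbove_succAbove (i j : Fin m) :
    insertIdAt k M (k.succAbove i) (k.succAbove j) = M i j := by
  simp [insertIdAt]

lemma insertIdAt_one : insertIdAt k (1 : Matrix (Fin m) (Fin m) R) = 1 := by
  ext i j
  induction i using k.succAboveCases <;> induction j using k.succAboveCases <;>
    simp [one_apply, Fin.succAbove_ne, (Fin.succAbove_ne _ _).symm]

lemma insertIdAt_mul (N : Matrix (Fin m) (Fin m) R) :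
    insertIdAt k (M * N) = insertIdAt k M * insertIdAt k N := by
  ext i j
  induction i using k.succAboveCases <;> induction j using k.succAboveCases <;>
    simp [mul_apply, Fin.sum_univ_succAbove _ k]

def insertIdAtHom : Matrix (Fin m) (Fin m) R →* Matrix (Fin (m + 1)) (Fin (m + 1)) R where
  toFun := insertIdAt k
  map_one' := insertIdAt_one k
  map_mul' := insertIdAt_mul k

end

lemma insertIdAt_transvection {R : Type*} [CommRing R] {m : ℕ} (k : Fin (m + 1)) (a b : Fin m)
    (c : R) :
    insertIdAt k (transvection a b c) = transvection (k.succAbove a) (k.succAbove b) c := by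
  ext i j
  induction i using k.succAboveCases <;> induction j using k.succAboveCases <;>
    simp [transvection, one_apply, single_apply, Fin.succAbove_ne, (Fin.succAbove_ne _ _).symm]

variable {ι R : Type*} [Fintype ι] [DecidableEq ι]

noncomputable def offDiagSupport [Zero R] (M : Matrix ι ι R) : Finset (ι × ι) :=
  {p | p.1 ≠ p.2 ∧ M p.1 p.2 ≠ 0}

@[simp] lemma mem_offDiagSupport [Zero R] {M : Matrix ι ι R} {p : ι × ι} :
    p ∈ M.offDiagSupport ↔ p.1 ≠ p.2 ∧ M p.1 p.2 ≠ 0 := by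
  simp [offDiagSupport]

variable [CommRing R]

lemma transvection_mul_eq_add_single {a b : ι} (hab : a ≠ b) {M : Matrix ι ι R}
    (hb : M b = (1 : Matrix ι ι R) b) (c : R) :
    transvection a b c * M = M + single a b c := by
  ext i j
  by_cases hi : i = a
  · subst hi
    simp [hb, one_apply, single_apply]
  · simp [hi, Ne.symm hi]

lemma offDiagSupport_transvection_mul {a b : ι} (hab : a ≠ b) {M : Matrix ι ι R}
    (hb : M b = (1 : Matrix ι ι R) b) :
    (transvection a b (-M a b) * M).offDiagSupport = M.offDiagSupport.erase (a, b) := by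
  ext ⟨i, j⟩
  rw [transvection_mul_eq_add_single hab hb]
  by_cases h : a = i ∧ b = j
  · obtain ⟨rfl, rfl⟩ := h
    simp
  · simp [h, Prod.ext_iff, eq_comm]

end Matrix

local notation:max "↑ₘ" M:max => Units.val (Subtype.val M)

section

variable {F : Type} [Field F]

lemma isUnitriangular_transvection {n : ℕ} {a b : Fin n} (hab : a < b) (c : F) :
    IsUnitriangular (Matrix.transvection a b c) := by
  refine ⟨fun i => ?_, fun i j hji => ?_⟩
  · have : ¬(a = i ∧ b = i) := fun h => hab.ne (h.1.trans h.2.symm)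
    simp [Matrix.transvection, this]
  · have : ¬(a = i ∧ b = j) := by rintro ⟨rfl, rfl⟩; exact absurd hab hji.not_gt
    simp [Matrix.transvection, this, Matrix.one_apply_ne hji.ne']

lemma IsUnitriangular.insertIdAt {m : ℕ} (k : Fin (m + 1)) {M : Matrix (Fin m) (Fin m) F}
    (hM : IsUnitriangular M) : IsUnitriangular (M.insertIdAt k) := by
  refine ⟨fun i => ?_, fun i j hji => ?_⟩
  · induction i using k.succAboveCases <;> simp [hM.1]
  · induction i using k.succAboveCases <;> induction j using k.succAboveCases
    · exact absurd hji (lt_irrefl _)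
    · simp
    · simp
    · simpa using hM.2 (Fin.succAbove_lt_succAbove_iff.1 hji)

namespace UT

lemma ext {n : ℕ} {M N : UT n F} (h : ↑ₘM = ↑ₘN) : M = N :=
  Subtype.ext (Units.ext h)

noncomputable def transvection {n : ℕ} {a b : Fin n} (hab : a < b) (c : F) : UT n F :=
  ⟨⟨Matrix.transvection a b c, Matrix.transvection a b (-c),
    by simp [Matrix.transvection_mul_transvection_same _ _ hab.ne],
    by simp [Matrix.transvection_mul_transvection_same _ _ hab.ne]⟩,
    isUnitriangular_transvection hab c⟩

section Transvection

variable {n : ℕ} {a b : Fin n} (hab : a < b)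

@[simp] lemma coe_transvection (c : F) : ↑ₘ(transvection hab c) = Matrix.transvection a b c :=
  rfl

lemma transvection_inv (c : F) : (transvection hab c)⁻¹ = transvection hab (-c) :=
  ext rfl

lemma rootSet_eq_range : rootSet n F a b = Set.range (transvection hab) := by
  ext M
  exact ⟨fun ⟨c, hc⟩ => ⟨c, ext hc.symm⟩, fun ⟨c, hc⟩ => ⟨c, hc ▸ rfl⟩⟩

lemma transvection_mem_groupOf {S : Set (Fin n × Fin n)} (h : (a, b) ∈ S) (c : F) :
    transvection hab c ∈ groupOf n F S :=
  Subgroup.subset_closure (Set.mem_biUnion h ⟨c, rfl⟩)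

end Transvection

section InsertIdAt

variable {m : ℕ} (k : Fin (m + 1))

noncomputable def insertIdAt : UT m F →* UT (m + 1) F :=
  ((Units.map (Matrix.insertIdAtHom k)).comp (UT m F).subtype).codRestrict (UT (m + 1) F)
    fun M => IsUnitriangular.insertIdAt k M.2

@[simp] lemma coe_insertIdAt (M : UT m F) : ↑ₘ(insertIdAt k M) = (↑ₘM).insertIdAt k :=
  rfl

lemma insertIdAt_injective : Function.Injective (insertIdAt (F := F) k) := by
  intro M N h
  apply ext
  ext i j
  simpa using congrFun₂ (congrArg (fun M : UT (m + 1) F => ↑ₘM) h)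
    (k.succAbove i) (k.succAbove j)

lemma insertIdAt_transvection {a b : Fin m} (hab : a < b) (c : F) :
    insertIdAt k (transvection hab c) = transvection (k.strictMono_succAbove hab) c :=
  ext (Matrix.insertIdAt_transvection k a b c)

lemma image_insertIdAt_rootSet {a b : Fin m} (hab : a < b) :
    insertIdAt k '' rootSet m F a b = rootSet (m + 1) F (k.succAbove a) (k.succAbove b) := by
  rw [rootSet_eq_range hab, rootSet_eq_range (k.strictMono_succAbove hab), ← Set.range_comp]
  exact congrArg Set.range (funext (insertIdAt_transvection k hab))

lemma map_insertIdAt_groupOf {S : Set (Fin m × Fin m)} (hS : S ⊆ posRoots m) :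
    (groupOf m F S).map (insertIdAt k) =
      groupOf (m + 1) F (Prod.map k.succAbove k.succAbove '' S) := by
  rw [groupOf, groupOf, MonoidHom.map_closure, Set.image_iUnion₂, Set.biUnion_image]
  congr 1
  exact Set.iUnion₂_congr fun p hp => image_insertIdAt_rootSet k (hS hp)

end InsertIdAt

section Generation

variable {n : ℕ}

lemma eq_one_of_offDiagSupport_eq_empty {M : UT n F} (h : (↑ₘM).offDiagSupport = ∅) :
    M = 1 := by
  apply ext
  ext i j
  by_cases hij : i = j
  · subst hij
    simpa using M.2.1 i
  · have : (i, j) ∉ (↑ₘM).offDiagSupport := h ▸ Finset.notMem_empty (i, j)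
    simpa [hij, Matrix.one_apply_ne hij] using this

lemma exists_mem_offDiagSupport_row_eq_one {M : UT n F} (h : (↑ₘM).offDiagSupport.Nonempty) :
    ∃ a b : Fin n, a < b ∧ (a, b) ∈ (↑ₘM).offDiagSupport ∧
      ↑ₘM b = (1 : Matrix (Fin n) (Fin n) F) b := by
  obtain ⟨⟨a, b⟩, hp, hmax⟩ := Finset.exists_max_image _ Prod.fst h
  have hab : a < b := by
    rw [Matrix.mem_offDiagSupport] at hp
    exact lt_of_le_of_ne (le_of_not_gt fun hba => hp.2 (M.2.2 hba)) hp.1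
  refine ⟨a, b, hab, hp, funext fun j => ?_⟩
  by_cases hj : b = j
  · subst hj
    simpa using M.2.1 b
  · by_contra hne
    have := hmax (b, j) (Matrix.mem_offDiagSupport.2 ⟨hj, by simpa [hj] using hne⟩)
    exact absurd hab this.not_gt

theorem groupOf_posRoots_eq_top : groupOf n F (posRoots n) = ⊤ := by
  refine (Subgroup.eq_top_iff' _).2 fun M => ?_
  induction M using (measure fun M : UT n F => (↑ₘM).offDiagSupport.card).wf.induction
    with | _ M ih => ?_
  rcases (↑ₘM).offDiagSupport.eq_empty_or_nonempty with h | h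
  · rw [eq_one_of_offDiagSupport_eq_empty h]
    exact one_mem _
  obtain ⟨a, b, hab, hp, hrow⟩ := exists_mem_offDiagSupport_row_eq_one h
  set c := ↑ₘM a b
  set M' := (transvection hab c)⁻¹ * M
  have hM' : (↑ₘM').offDiagSupport = (↑ₘM).offDiagSupport.erase (a, b) := by
    simp only [M', transvection_inv, Subgroup.coe_mul, Units.val_mul, coe_transvection]
    exact Matrix.offDiagSupport_transvection_mul hab.ne hrow
  have hlt : (↑ₘM').offDiagSupport.card < (↑ₘM).offDiagSupport.card :=
    hM' ▸ Finset.card_erase_lt_of_mem hp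
  rw [← mul_inv_cancel_left (transvection hab c) M]
  exact mul_mem (transvection_mem_groupOf hab hab c) (ih M' hlt)

end Generation

end UT

end

lemma image_succAbove_posRoots {m : ℕ} (k : Fin (m + 1)) :
    Prod.map k.succAbove k.succAbove '' posRoots m =
      {p ∈ posRoots (m + 1) | p.1 ≠ k ∧ p.2 ≠ k} := by
  ext ⟨i, j⟩
  constructor
  · rintro ⟨⟨a, b⟩, hab, h⟩
    obtain ⟨rfl, rfl⟩ := Prod.ext_iff.1 h
    exact ⟨k.strictMono_succAbove hab, Fin.succAbove_ne _ _, Fin.succAbove_ne _ _⟩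
  · rintro ⟨hij, hi, hj⟩
    obtain ⟨a, rfl⟩ := Fin.exists_succAbove_eq hi
    obtain ⟨b, rfl⟩ := Fin.exists_succAbove_eq hj
    exact ⟨(a, b), Fin.succAbove_lt_succAbove_iff.1 hij, rfl⟩

/-- In position coordinates `α_{1,k} = (0, k)` and `α_{k+1,n-1} = (k, n-1)`; addition of roots
corresponds to concatenation `(a,b) + (b,d) = (a,d)` of positions. -/
theorem Tk_closed_and_iso (n k : ℕ) (hk2 : k < n - 1)
    (F : Type) [Field F] :
    ∀ T : Set (Fin n × Fin n),
      T = posRoots n \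
        ({((⟨0, by omega⟩ : Fin n), (⟨k, by omega⟩ : Fin n)),
          ((⟨k, by omega⟩ : Fin n), (⟨n - 1, by omega⟩ : Fin n))}
          ∪ leg (⟨0, by omega⟩ : Fin n) (⟨k, by omega⟩ : Fin n)
          ∪ arm (⟨k, by omega⟩ : Fin n) (⟨n - 1, by omega⟩ : Fin n)) →
      (∀ p ∈ T, ∀ p' ∈ T, p.2 = p'.1 → (p.1, p'.2) ∈ T) ∧
      Nonempty (groupOf n F T ≃* UT (n - 1) F) := by
  intro T hT
  obtain ⟨m, rfl⟩ : ∃ m, n = m + 1 := ⟨n - 1, by omega⟩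
  set kk : Fin (m + 1) := ⟨k, by omega⟩
  have hT_image : T = Prod.map kk.succAbove kk.succAbove '' posRoots m := by
    rw [image_succAbove_posRoots, hT]
    ext ⟨⟨a, ha⟩, ⟨b, hb⟩⟩
    simp only [kk, posRoots, leg, arm, Set.mem_sdiff, Set.mem_union, Set.mem_insert_iff,
      Set.mem_singleton_iff, Set.mem_ofPred_eq, Prod.mk.injEq, Fin.mk.injEq, Fin.mk_lt_mk, ne_eq]
    omega
  refine ⟨?_, ⟨?_⟩⟩
  · rw [hT_image]
    rintro _ ⟨p, hp, rfl⟩ _ ⟨q, hq, rfl⟩ h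
    exact ⟨(p.1, q.2), hp.trans_eq (Fin.succAbove_right_injective h) |>.trans hq, rfl⟩
  · have hT_range : groupOf (m + 1) F T = (UT.insertIdAt kk).range := by
      rw [hT_image, ← UT.map_insertIdAt_groupOf kk subset_rfl, UT.groupOf_posRoots_eq_top,
        ← MonoidHom.range_eq_map]
    exact (MulEquiv.subgroupCongr hT_range).trans
      (MonoidHom.ofInjective (UT.insertIdAt_injective kk)).symm
end
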